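/- arXiv:2011.03458 — 4 statements merged into one kernel-verified Lean document; each statement's English description precedes it below -/
import Mathlib

section
/- Let n : ℕ and let I be any polynomial in MvPolynomial (Fin (n+1)) ℚ. Then the shear substitution of I expands as a Taylor-type series in the operator D: for every N ≥ the weighted total degree of I (the maximum of Σ_i i·ν_i over monomials a_0^{ν_0}⋯a_n^{ν_n} occurring in I), one has φ(I) = Σ_{i=0}^{N} (1/i!) · z^i · ι(D^i(I)); in particular D^i(I) = 0 for all i exceeding the weighted total degree of I. -/
open MvPolynomial

/-- The operator `D(I) = Σ_{i=1}^{n} i · a_{i-1} · ∂I/∂a_i`. -/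
noncomputable def Dop (n : ℕ) :
    MvPolynomial (Fin (n+1)) ℚ →ₗ[ℚ] MvPolynomial (Fin (n+1)) ℚ :=
  ∑ i : Fin n, ((i : ℚ) + 1) •
    ((LinearMap.mulLeft ℚ (X i.castSucc)).comp (pderiv i.succ).toLinearMap)

/-- The operator `Δ(I) = Σ_{i=0}^{n-1} (n-i) · a_{i+1} · ∂I/∂a_i`. -/
noncomputable def Δop (n : ℕ) :
    MvPolynomial (Fin (n+1)) ℚ →ₗ[ℚ] MvPolynomial (Fin (n+1)) ℚ :=
  ∑ i : Fin n, ((n : ℚ) - (i : ℚ)) •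
    ((LinearMap.mulLeft ℚ (X i.succ)).comp (pderiv i.castSucc).toLinearMap)

/-- `Q_n(k,m)`: span of monomials of degree `k` and weight `m`. -/
noncomputable def Qspace (n k m : ℕ) : Submodule ℚ (MvPolynomial (Fin (n+1)) ℚ) :=
  Submodule.span ℚ { p | ∃ ν : Fin (n+1) →₀ ℕ,
    (∑ i : Fin (n+1), ν i) = k ∧ (∑ i : Fin (n+1), (i : ℕ) * ν i) = m ∧ p = monomial ν (1 : ℚ) }

/-- `S_n(k,m)`: semi-invariants of degree `k` and weight `m`. -/
noncomputable def Sspace (n k m : ℕ) : Submodule ℚ (MvPolynomial (Fin (n+1)) ℚ) :=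
  Qspace n k m ⊓ LinearMap.ker (Dop n)

/-- `p(k,n,m)`: number of partitions of `m` in a `k × n` rectangle. -/
def pRect (k n m : ℕ) : ℕ :=
  (Finset.univ.filter
    (fun P : Nat.Partition m => Multiset.card P.parts ≤ k ∧ ∀ x ∈ P.parts, x ≤ n)).card

/-- Coefficient embedding `ℚ[a] → ℚ[z][a]`. -/
noncomputable def ιmap (n : ℕ) :
    MvPolynomial (Fin (n+1)) ℚ →+* MvPolynomial (Fin (n+1)) (Polynomial ℚ) :=
  MvPolynomial.map (Polynomial.C)

/-- The shear substitution `a_i ↦ a_i' = Σ_{j=0}^{i} C(i,j) a_{i-j} z^j`. -/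
noncomputable def φmap (n : ℕ) :
    MvPolynomial (Fin (n+1)) ℚ →ₐ[ℚ] MvPolynomial (Fin (n+1)) (Polynomial ℚ) :=
  aeval (fun i : Fin (n+1) => ∑ j ∈ Finset.range ((i : ℕ) + 1),
    (C ((Nat.choose (i : ℕ) j : Polynomial ℚ) * Polynomial.X ^ j)) *
      X (⟨(i : ℕ) - j, Nat.lt_of_le_of_lt (Nat.sub_le _ _) i.isLt⟩ : Fin (n+1)))

/-- The vertical shear substitution `a_i ↦ a_i'' = Σ_{j=0}^{n-i} C(n-i,j) a_{i+j} z^j`. -/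
noncomputable def ψmap (n : ℕ) :
    MvPolynomial (Fin (n+1)) ℚ →ₐ[ℚ] MvPolynomial (Fin (n+1)) (Polynomial ℚ) :=
  aeval (fun i : Fin (n+1) => ∑ j ∈ (Finset.range (n - (i : ℕ) + 1)).attach,
    (C ((Nat.choose (n - (i : ℕ)) j.1 : Polynomial ℚ) * Polynomial.X ^ j.1)) *
      X (⟨(i : ℕ) + j.1, by
        have h1 := Finset.mem_range.mp j.2
        have h2 := i.isLt
        omega⟩ : Fin (n+1)))

/-- The weighted total degree of `I`: max of `Σ_i i·ν_i` over monomials of `I`. -/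
def wdeg (n : ℕ) (I : MvPolynomial (Fin (n+1)) ℚ) : ℕ :=
  I.support.sup (fun ν => ∑ i : Fin (n+1), (i : ℕ) * ν i)

/-!
Read `ℚ[z][a]` inside `ℚ[a]⟦z⟧`. There the shear substitution `φ` and `exp (z D) = ∑ zⁱ/i! Dⁱ`
are both `ℚ`-algebra homomorphisms out of `ℚ[a]`, the second because `D` is a derivation, so that
`Dⁱ` obeys the binomial Leibniz rule. They agree on the generators, since
`Dʲ aₖ = k!/(k-j)! · aₖ₋ⱼ`, hence everywhere. The series is a polynomial in `z` of degree at most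
the weight: `D^{k+1}` kills `aₖ`, and by the Leibniz rule `ker D^{j+1} · ker D^{k+1}` lies in
`ker D^{j+k+1}`.
-/

open scoped PowerSeries

namespace Derivation

section Leibniz

variable {R A : Type*} [CommSemiring R] [CommSemiring A] [Algebra R A] (D : Derivation R A A)

open Finset in
theorem pow_apply_mul (a b : A) (i : ℕ) :
    ((D : Module.End R A) ^ i) (a * b) = ∑ x ∈ antidiagonal i,
      i.choose x.1 • (((D : Module.End R A) ^ x.1) a * ((D : Module.End R A) ^ x.2) b) := by
  have pow_succ_apply (k : ℕ) (c : A) :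
      ((D : Module.End R A) ^ (k + 1)) c = D (((D : Module.End R A) ^ k) c) := by
    rw [pow_succ', Module.End.mul_apply, coeFn_coe]
  induction i with
  | zero => simp
  | succ i ih =>
    rw [sum_antidiagonal_choose_succ_nsmul
      (fun j k => ((D : Module.End R A) ^ j) a * ((D : Module.End R A) ^ k) b),
      pow_succ_apply, ih, map_sum]
    simp only [map_nsmul, leibniz, smul_eq_mul, pow_succ_apply, smul_add, sum_add_distrib]
    congr 1
    refine sum_congr rfl fun x hx => ?_
    rw [i.choose_symm_of_eq_add (HasAntidiagonal.mem_antidiagonal.1 hx).symm, mul_comm]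

open Finset in
theorem mul_mem_ker_pow {a b : A} {j k : ℕ}
    (ha : a ∈ LinearMap.ker ((D : Module.End R A) ^ (j + 1)))
    (hb : b ∈ LinearMap.ker ((D : Module.End R A) ^ (k + 1))) :
    a * b ∈ LinearMap.ker ((D : Module.End R A) ^ (j + k + 1)) := by
  rw [LinearMap.mem_ker, pow_apply_mul]
  refine sum_eq_zero fun x hx => ?_
  rw [HasAntidiagonal.mem_antidiagonal] at hx
  rcases le_or_gt (j + 1) x.1 with hj | hj
  · rw [Module.End.pow_map_zero_of_le hj ha, zero_mul, smul_zero]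
  · rw [Module.End.pow_map_zero_of_le (by omega : k + 1 ≤ x.2) hb, mul_zero, smul_zero]

theorem pow_mem_ker_pow {a : A} {j : ℕ}
    (ha : a ∈ LinearMap.ker ((D : Module.End R A) ^ (j + 1))) (m : ℕ) :
    a ^ m ∈ LinearMap.ker ((D : Module.End R A) ^ (j * m + 1)) := by
  induction m with
  | zero => simp
  | succ m ih => simpa [pow_succ, Nat.mul_succ] using D.mul_mem_ker_pow ih ha

end Leibniz

section Exp

variable {A : Type*} [CommRing A] [Algebra ℚ A] (D : Derivation ℚ A A)

noncomputable def exp : A →ₐ[ℚ] A⟦X⟧ :=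
  AlgHom.ofLinearMap
    { toFun a := PowerSeries.mk fun i => (i.factorial : ℚ)⁻¹ • ((D : Module.End ℚ A) ^ i) a
      map_add' := fun a b => by ext; simp [smul_add]
      map_smul' := fun c a => by
        ext i
        rw [RingHom.id_apply, PowerSeries.coeff_smul, PowerSeries.coeff_mk, PowerSeries.coeff_mk,
          LinearMap.map_smul, smul_comm] }
    (by
      ext (_ | i)
      · simp
      · simp only [LinearMap.coe_mk, AddHom.coe_mk, PowerSeries.coeff_mk, PowerSeries.coeff_one,
          pow_succ, Module.End.mul_apply, coeFn_coe, map_one_eq_zero, map_zero, smul_zero]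
        simp)
    (fun a b => by
      ext i
      simp only [LinearMap.coe_mk, AddHom.coe_mk, PowerSeries.coeff_mk, PowerSeries.coeff_mul,
        pow_apply_mul, Finset.smul_sum]
      refine Finset.sum_congr rfl fun x hx => ?_
      obtain rfl := Finset.HasAntidiagonal.mem_antidiagonal.1 hx
      rw [smul_mul_smul_comm, ← Nat.cast_smul_eq_nsmul ℚ, smul_smul, Nat.cast_add_choose]
      congr 1
      field_simp)

theorem coeff_exp (i : ℕ) (a : A) :
    PowerSeries.coeff i (exp D a) = (i.factorial : ℚ)⁻¹ • ((D : Module.End ℚ A) ^ i) a := by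
  simp [exp]

theorem exp_eq_sum {a : A} {N : ℕ}
    (ha : a ∈ LinearMap.ker ((D : Module.End ℚ A) ^ (N + 1))) :
    exp D a = ∑ i ∈ Finset.range (N + 1),
      (i.factorial : ℚ)⁻¹ •
        (PowerSeries.X ^ i * PowerSeries.C (((D : Module.End ℚ A) ^ i) a)) := by
  ext j
  simp only [coeff_exp, map_sum, PowerSeries.coeff_smul, mul_comm (PowerSeries.X ^ _),
    PowerSeries.coeff_C_mul_X_pow, smul_ite, smul_zero, Finset.sum_ite_eq, Finset.mem_range]
  split_ifs with hj
  · rfl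
  · rw [Module.End.pow_map_zero_of_le (by omega) ha, smul_zero]

end Exp

end Derivation

namespace MvPolynomial

variable (σ R : Type*) [CommSemiring R]

noncomputable def coeffsToPowerSeries :
    MvPolynomial σ (Polynomial R) →ₐ[R] (MvPolynomial σ R)⟦X⟧ :=
  ((Polynomial.coeToPowerSeries.algHom (MvPolynomial σ R)).restrictScalars R).comp
    ((optionEquivRight R σ).symm.trans (optionEquivLeft R σ)).toAlgHom

variable {σ R}

theorem coeffsToPowerSeries_injective : Function.Injective (coeffsToPowerSeries σ R) := by
  intro p q h
  apply ((optionEquivRight R σ).symm.trans (optionEquivLeft R σ)).injective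
  apply Polynomial.coe_injective
  simpa [coeffsToPowerSeries] using h

@[simp]
theorem coeffsToPowerSeries_X (i : σ) : coeffsToPowerSeries σ R (X i) = PowerSeries.C (X i) := by
  simp [coeffsToPowerSeries, (AlgEquiv.symm_apply_eq _).2 (optionEquivRight_X_some R σ i).symm,
    optionEquivLeft_X_some]

@[simp]
theorem coeffsToPowerSeries_C_X :
    coeffsToPowerSeries σ R (C Polynomial.X) = PowerSeries.X := by
  simp [coeffsToPowerSeries, (AlgEquiv.symm_apply_eq _).2 (optionEquivRight_X_none R σ).symm,
    optionEquivLeft_X_none]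

@[simp]
theorem coeffsToPowerSeries_map_C (p : MvPolynomial σ R) :
    coeffsToPowerSeries σ R (map Polynomial.C p) = PowerSeries.C p := by
  induction p using MvPolynomial.induction_on with
  | C r =>
    rw [map_C, show C (Polynomial.C r) = algebraMap R (MvPolynomial σ (Polynomial R)) r from rfl,
      AlgHom.commutes, PowerSeries.algebraMap_apply, algebraMap_eq]
  | add p q hp hq => simp [hp, hq]
  | mul_X p i hp => simp [hp]

end MvPolynomial

section Shear

variable {n : ℕ}

theorem Dop_mul (p q : MvPolynomial (Fin (n+1)) ℚ) :
    Dop n (p * q) = p • Dop n q + q • Dop n p := by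
  simp only [Dop, LinearMap.sum_apply, LinearMap.smul_apply, LinearMap.coe_comp,
    Function.comp_apply, LinearMap.mulLeft_apply, Derivation.coeFn_coe, pderiv_mul, smul_eq_mul,
    Finset.mul_sum, ← Finset.sum_add_distrib]
  refine Finset.sum_congr rfl fun i _ => ?_
  simp only [smul_eq_C_mul]
  ring

variable (n) in
noncomputable def dopDerivation :
    Derivation ℚ (MvPolynomial (Fin (n+1)) ℚ) (MvPolynomial (Fin (n+1)) ℚ) :=
  Derivation.mk' (Dop n) Dop_mul

theorem coe_dopDerivation :
    (dopDerivation n : Module.End ℚ (MvPolynomial (Fin (n+1)) ℚ)) = Dop n :=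
  rfl

theorem Dop_X (k : Fin (n+1)) :
    Dop n (X k) = ((k : ℕ) : ℚ) • X ⟨(k : ℕ) - 1, by omega⟩ := by
  simp only [Dop, LinearMap.sum_apply, LinearMap.smul_apply, LinearMap.coe_comp,
    Function.comp_apply, LinearMap.mulLeft_apply, Derivation.coeFn_coe]
  induction k using Fin.cases with
  | zero => simp [pderiv_X_of_ne (Fin.succ_ne_zero _).symm]
  | succ j =>
    rw [Finset.sum_eq_single j (fun i _ hij => by
      rw [pderiv_X_of_ne ((Fin.succ_injective n).ne hij.symm), mul_zero, smul_zero])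
      (by simp)]
    simp only [pderiv_X_self, mul_one, Fin.val_succ, Nat.cast_add, Nat.cast_one]
    rfl

/-- For `i > k` the index `k - i` truncates to `0`, but the coefficient vanishes. -/
theorem Dop_pow_X (k : Fin (n+1)) (i : ℕ) :
    (Dop n ^ i) (X k) = (((k : ℕ).descFactorial i : ℕ) : ℚ) • X ⟨(k : ℕ) - i, by omega⟩ := by
  induction i with
  | zero => simp
  | succ i ih =>
    rw [pow_succ', Module.End.mul_apply, ih, map_smul, Dop_X, smul_smul, Nat.descFactorial_succ]
    simp only [Nat.sub_sub]
    push_cast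
    ring_nf

theorem X_mem_ker_Dop_pow (k : Fin (n+1)) : X k ∈ LinearMap.ker (Dop n ^ ((k : ℕ) + 1)) := by
  rw [LinearMap.mem_ker, Dop_pow_X, Nat.descFactorial_of_lt (Nat.lt_succ_self _), Nat.cast_zero,
    zero_smul]

theorem monomial_one_mem_ker_Dop_pow (ν : Fin (n+1) →₀ ℕ) :
    monomial ν (1 : ℚ) ∈ LinearMap.ker (Dop n ^ (∑ k : Fin (n+1), (k : ℕ) * ν k + 1)) := by
  induction ν using Finsupp.induction_linear with
  | zero => simp [← coe_dopDerivation]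
  | add μ ν hμ hν =>
    simpa [monomial_mul, mul_add, Finset.sum_add_distrib, coe_dopDerivation] using
      (dopDerivation n).mul_mem_ker_pow hμ hν
  | single k m =>
    simpa [X_pow_eq_monomial, Finsupp.single_apply, coe_dopDerivation] using
      (dopDerivation n).pow_mem_ker_pow (X_mem_ker_Dop_pow k) m

theorem mem_ker_Dop_pow_of_wdeg_le {I : MvPolynomial (Fin (n+1)) ℚ} {N : ℕ}
    (h : wdeg n I ≤ N) :
    I ∈ LinearMap.ker (Dop n ^ (N + 1)) := by
  rw [I.as_sum]
  refine Submodule.sum_mem _ fun ν hν => ?_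
  rw [← mul_one (coeff ν I), ← smul_eq_mul, ← smul_monomial]
  refine Submodule.smul_mem _ _
    (Module.End.pow_map_zero_of_le ?_ (monomial_one_mem_ker_Dop_pow ν))
  exact Nat.succ_le_succ ((Finset.le_sup hν).trans h)

theorem coeffsToPowerSeries_comp_φmap :
    (coeffsToPowerSeries (Fin (n+1)) ℚ).comp (φmap n) = (dopDerivation n).exp := by
  refine algHom_ext fun k => ?_
  rw [AlgHom.comp_apply, φmap, aeval_X, (dopDerivation n).exp_eq_sum (X_mem_ker_Dop_pow k),
    map_sum]
  refine Finset.sum_congr rfl fun j _ => ?_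
  have hcoeff : (j.factorial : ℚ)⁻¹ * ((j.factorial * (k : ℕ).choose j : ℕ) : ℚ) =
      ((k : ℕ).choose j : ℚ) := by
    push_cast
    field_simp
  rw [coe_dopDerivation, Dop_pow_X, Nat.descFactorial_eq_factorial_mul_choose]
  simp only [map_mul, map_pow, map_natCast, coeffsToPowerSeries_C_X, coeffsToPowerSeries_X]
  rw [Nat.cast_smul_eq_nsmul ℚ, map_nsmul, mul_smul_comm, ← Nat.cast_smul_eq_nsmul ℚ, smul_smul,
    hcoeff, Nat.cast_smul_eq_nsmul, nsmul_eq_mul, mul_assoc]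

end Shear

/-- Taylor-type expansion of the shear substitution in the operator `D`. -/
theorem shear_taylor_expansion (n : ℕ) (I : MvPolynomial (Fin (n+1)) ℚ) :
    (∀ N : ℕ, wdeg n I ≤ N →
      φmap n I = ∑ i ∈ Finset.range (N + 1),
        ((Nat.factorial i : ℚ)⁻¹) • (C (Polynomial.X ^ i) * ιmap n ((Dop n ^ i) I))) ∧
    ∀ i : ℕ, wdeg n I < i → (Dop n ^ i) I = 0 := by
  refine ⟨fun N hN => coeffsToPowerSeries_injective ?_,
    fun i hi => Module.End.pow_map_zero_of_le hi (mem_ker_Dop_pow_of_wdeg_le le_rfl)⟩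
  rw [← AlgHom.comp_apply, coeffsToPowerSeries_comp_φmap,
    (dopDerivation n).exp_eq_sum (mem_ker_Dop_pow_of_wdeg_le hN), map_sum]
  refine Finset.sum_congr rfl fun i _ => ?_
  simp [ιmap, coe_dopDerivation]
end

section
/- Let n : ℕ and let I ∈ MvPolynomial (Fin (n+1)) ℚ. Then I is a semi-invariant with respect to the vertical shear transformation, i.e. ψ(I) = ι(I), if and only if Δ(I) = 0. -/
open MvPolynomial

/-!
Regard `ψ(I)` as a polynomial `F(I)` in `z` with coefficients in `ℚ[a]`. Then `F(I)(0) = I`, and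
`d/dz F(I) = F(Δ I)`: both sides are derivations along `F`, and on generators this is
`d/dz a_i'' = (n - i) a_{i+1}''`. So `F(I)` is constant in `z`, i.e. `ψ(I) = ι(I)`, iff
`F(Δ I) = 0`, iff `Δ I = 0` since `F` has the left inverse `z ↦ 0`.
-/

namespace MvPolynomial

variable (R σ : Type*) [CommSemiring R]

noncomputable def polynomialCoeffEquiv :
    MvPolynomial σ (Polynomial R) ≃ₐ[R] Polynomial (MvPolynomial σ R) :=
  (optionEquivRight R σ).symm.trans (optionEquivLeft R σ)

variable {R σ}

@[simp]
lemma polynomialCoeffEquiv_X (i : σ) :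
    polynomialCoeffEquiv R σ (X i) = Polynomial.C (X i) := by
  rw [polynomialCoeffEquiv, AlgEquiv.trans_apply, ← optionEquivRight_X_some,
    AlgEquiv.symm_apply_apply, optionEquivLeft_X_some]

@[simp]
lemma polynomialCoeffEquiv_C (p : Polynomial R) :
    polynomialCoeffEquiv R σ (C p) = p.map C := by
  induction p using Polynomial.induction_on' with
  | add p q hp hq => simp_all
  | monomial k r =>
    rw [← Polynomial.C_mul_X_pow_eq_monomial, map_mul, map_pow, ← optionEquivRight_C,
      ← optionEquivRight_X_none, ← map_pow, ← map_mul, polynomialCoeffEquiv,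
      AlgEquiv.trans_apply, AlgEquiv.symm_apply_apply]
    simp [optionEquivLeft_X_none, optionEquivLeft_C]

lemma polynomialCoeffEquiv_map_C (p : MvPolynomial σ R) :
    polynomialCoeffEquiv R σ (map Polynomial.C p) = Polynomial.C p := by
  induction p using MvPolynomial.induction_on <;> simp_all

end MvPolynomial

open Polynomial (derivative)

theorem MvPolynomial.derivative_algHom_eq_of_X {R σ A : Type*} [CommSemiring R] [CommSemiring A]
    [Algebra R A] (F : MvPolynomial σ R →ₐ[R] Polynomial A)
    (D : Derivation R (MvPolynomial σ R) (MvPolynomial σ R))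
    (hX : ∀ i, derivative (F (X i)) = F (D (X i))) (p : MvPolynomial σ R) :
    derivative (F p) = F (D p) := by
  induction p using MvPolynomial.induction_on with
  | C r => simp [← MvPolynomial.algebraMap_eq, Polynomial.algebraMap_apply]
  | add p q hp hq => simp [hp, hq]
  | mul_X p i hp => simp [Polynomial.derivative_mul, hp, hX, Derivation.leibniz, add_comm, mul_comm]

open Polynomial in
theorem Polynomial.derivative_sum_choose_mul {S : Type*} [CommSemiring S] (m : ℕ)
    (a : ℕ → S) :
    derivative (∑ j ∈ Finset.range (m + 2), C ((m + 1).choose j * a j) * X ^ j) =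
      (m + 1 : S[X]) * ∑ j ∈ Finset.range (m + 1), C (m.choose j * a (j + 1)) * X ^ j := by
  rw [derivative_sum, Finset.sum_range_succ', Finset.mul_sum]
  simp only [derivative_C_mul_X_pow, Nat.cast_zero, mul_zero, map_zero, zero_mul, add_zero]
  refine Finset.sum_congr rfl fun j _ => ?_
  have hchoose : ((m + 1 : ℕ) * m.choose j : S) = (m + 1).choose (j + 1) * (j + 1 : ℕ) := by
    exact_mod_cast congrArg (Nat.cast (R := S)) (Nat.add_one_mul_choose_eq m j)
  rw [Nat.add_sub_cancel, show (m + 1 : S[X]) = C ((m + 1 : ℕ) : S) by simp, ← mul_assoc,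
    ← C_mul, ← mul_assoc, hchoose, mul_right_comm _ (a _)]

section VerticalShear

variable (n : ℕ)

noncomputable def deltaDerivation :
    Derivation ℚ (MvPolynomial (Fin (n+1)) ℚ) (MvPolynomial (Fin (n+1)) ℚ) :=
  ∑ i : Fin n, ((n : ℚ) - i) • (X i.succ : MvPolynomial (Fin (n+1)) ℚ) • pderiv i.castSucc

lemma deltaDerivation_apply (p : MvPolynomial (Fin (n+1)) ℚ) :
    deltaDerivation n p = Δop n p := by
  rw [deltaDerivation, ← Derivation.coeFnAddMonoidHom_apply, map_sum, Finset.sum_apply]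
  simp [Δop]

lemma Δop_X_castSucc (i : Fin n) :
    Δop n (X i.castSucc) = ((n : ℚ) - i) • X i.succ := by
  simp [Δop, pderiv_X, Pi.single_apply]

lemma Δop_X_last : Δop n (X (Fin.last n)) = 0 := by
  simp [Δop, pderiv_X, Fin.ext_iff, Fin.is_lt _ |>.ne']


-- Only ever applied to `k ≤ n`; the `min` spares carrying that bound around.
noncomputable def clampedX (k : ℕ) : MvPolynomial (Fin (n+1)) ℚ := X ⟨min k n, by omega⟩

lemma clampedX_of_le {k : ℕ} (hk : k ≤ n) : clampedX n k = X ⟨k, by omega⟩ := by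
  simp [clampedX, hk]

lemma ψmap_X (i : Fin (n+1)) :
    ψmap n (X i) = ∑ j ∈ Finset.range (n - i + 1),
      C ((n - i).choose j * Polynomial.X ^ j) * map Polynomial.C (clampedX n (i + j)) := by
  rw [ψmap, aeval_X, eq_comm, ← Finset.sum_attach]
  refine Finset.sum_congr rfl fun ⟨j, hj⟩ _ => ?_
  have hj' := Finset.mem_range.mp hj
  simp only [clampedX, map_X]
  congr 3
  omega

noncomputable def verticalShear :
    MvPolynomial (Fin (n+1)) ℚ →ₐ[ℚ] Polynomial (MvPolynomial (Fin (n+1)) ℚ) :=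
  (polynomialCoeffEquiv ℚ (Fin (n+1))).toAlgHom.comp (ψmap n)

lemma verticalShear_X (i : Fin (n+1)) :
    verticalShear n (X i) = ∑ j ∈ Finset.range (n - i + 1),
      Polynomial.C ((n - i).choose j * clampedX n (i + j)) * Polynomial.X ^ j := by
  simp [verticalShear, ψmap_X, polynomialCoeffEquiv_map_C]

lemma eval_zero_verticalShear (p : MvPolynomial (Fin (n+1)) ℚ) :
    (verticalShear n p).eval 0 = p := by
  suffices ((Polynomial.aeval 0).restrictScalars ℚ).comp (verticalShear n) = AlgHom.id ℚ _ from
    congrArg (· p) this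
  refine MvPolynomial.algHom_ext fun i => ?_
  simp [verticalShear_X, Polynomial.eval_finsetSum, Finset.sum_range_succ',
    clampedX_of_le n i.is_le]

lemma derivative_verticalShear_X (i : Fin (n+1)) :
    derivative (verticalShear n (X i)) = verticalShear n (Δop n (X i)) := by
  cases i using Fin.lastCases with
  | last => simp [verticalShear_X, Δop_X_last]
  | cast i =>
    obtain ⟨m, hm⟩ : ∃ m, n - i = m + 1 := ⟨n - i - 1, by omega⟩
    have hcoeff : (n : ℚ) - i = (m + 1 : ℕ) := by
      rw [← Nat.cast_sub i.is_lt.le, hm]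
    rw [Δop_X_castSucc, map_smul, verticalShear_X, verticalShear_X, Fin.val_castSucc,
      Fin.val_succ, hm, show n - (i + 1) = m by omega, Polynomial.derivative_sum_choose_mul,
      hcoeff, Nat.cast_smul_eq_nsmul, nsmul_eq_mul]
    simp only [Nat.cast_add, Nat.cast_one, add_assoc, add_comm 1]

lemma derivative_verticalShear (p : MvPolynomial (Fin (n+1)) ℚ) :
    derivative (verticalShear n p) = verticalShear n (Δop n p) := by
  simpa only [deltaDerivation_apply] using
    derivative_algHom_eq_of_X (verticalShear n) (deltaDerivation n)
      (fun i => by simpa only [deltaDerivation_apply] using derivative_verticalShear_X n i) p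

end VerticalShear

/-- `I` is a semi-invariant for the vertical shear iff `Δ(I) = 0`. -/
theorem vertical_semiInvariant_iff_Delta_eq_zero (n : ℕ) (I : MvPolynomial (Fin (n+1)) ℚ) :
    ψmap n I = ιmap n I ↔ Δop n I = 0 := by
  have hinj : Function.Injective (verticalShear n) :=
    Function.LeftInverse.injective (eval_zero_verticalShear n)
  calc ψmap n I = ιmap n I ↔ verticalShear n I = Polynomial.C I := by
        rw [← (polynomialCoeffEquiv ℚ _).injective.eq_iff, ιmap, polynomialCoeffEquiv_map_C]
        rfl
    _ ↔ (verticalShear n I).natDegree = 0 := by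
        refine ⟨fun h => by rw [h, Polynomial.natDegree_C], fun h => ?_⟩
        rw [Polynomial.eq_C_of_natDegree_eq_zero h, Polynomial.coeff_zero_eq_eval_zero,
          eval_zero_verticalShear]
    _ ↔ verticalShear n (Δop n I) = 0 := by
        rw [← derivative_verticalShear, Polynomial.derivative_eq_zero]
    _ ↔ Δop n I = 0 := map_eq_zero_iff _ hinj
end

section
/- (Cayley's relation.) Let n, k : ℕ and m : ℕ with 2m ≤ nk, and set c = nk − 2m (an integer ≥ 0). Let I ∈ Q_n(k,m) be a semi-invariant, i.e. D(I) = 0. Then for every i ≥ 1, D(Δ^i(I)) = i·(c − i + 1) · Δ^{i-1}(I), where the scalar i·(c − i + 1) is taken in ℚ (via the cast from ℤ). -/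
open MvPolynomial

/-!
`D`, `Δ` and `H = Σ_t (n - 2t) a_t ∂/∂a_t` form an `𝔰𝔩₂`-triple. Each of them is a combination
of the operators `a_p ∂/∂a_q`, whose commutators are those of the elementary matrices of `𝔤𝔩`,
and a summation by parts gives `[D, Δ] = H`. By Euler's identities for the degree and the weight,
`H` acts on `Q_n(k,m)` as the scalar `nk - 2m`, and `Δ` maps `Q_n(k,m)` into `Q_n(k,m+1)`.
Cayley's relation is then the usual computation of `D Δ^i I` for a highest weight vector `I` of
weight `c = nk - 2m`, by induction on `i`.
-/

namespace MvPolynomial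

section PDeriv

variable {R σ : Type*}

theorem pderiv_pderiv_comm [CommSemiring R] (i j : σ) (p : MvPolynomial σ R) :
    pderiv i (pderiv j p) = pderiv j (pderiv i p) := by
  induction p using MvPolynomial.induction_on' with
  | add p q hp hq => simp only [map_add, hp, hq]
  | monomial s a =>
    obtain rfl | hij := eq_or_ne i j
    · rfl
    simp only [pderiv_monomial, Finsupp.tsub_apply, Finsupp.single_eq_of_ne' hij,
      Finsupp.single_eq_of_ne' hij.symm, tsub_zero, tsub_right_comm, mul_right_comm]

variable [CommRing R]

noncomputable def xMulPDeriv (a b : σ) : Module.End R (MvPolynomial σ R) :=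
  (LinearMap.mulLeft R (X a)).comp (pderiv b).toLinearMap

@[simp]
theorem xMulPDeriv_apply (a b : σ) (p : MvPolynomial σ R) :
    xMulPDeriv (R := R) a b p = X a * pderiv b p := rfl

/-- These are the commutation relations of the elementary matrices of `𝔤𝔩(σ)`. -/
theorem lie_xMulPDeriv [DecidableEq σ] (a b c d : σ) :
    ⁅xMulPDeriv (R := R) a b, xMulPDeriv (R := R) c d⁆ =
      (if b = c then xMulPDeriv a d else 0) - if d = a then xMulPDeriv c b else 0 := by
  refine LinearMap.ext fun p => ?_
  simp only [Ring.lie_def, LinearMap.sub_apply, Module.End.mul_apply, xMulPDeriv_apply,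
    pderiv_mul, pderiv_X, pderiv_pderiv_comm b d]
  by_cases hbc : b = c <;> by_cases hda : d = a <;>
    simp [hbc, hda, @eq_comm _ c b, @eq_comm _ a d] <;> ring

end PDeriv

theorem IsWeightedHomogeneous.X_mul_pderiv {R σ M : Type*} [CommSemiring R]
    [AddCancelCommMonoid M] {w : σ → M} {φ : MvPolynomial σ R} {m m' : M} {i j : σ}
    (hφ : φ.IsWeightedHomogeneous w m) (hm : m' + w i = m + w j) :
    (X j * pderiv i φ).IsWeightedHomogeneous w m' := by
  rw [← mem_weightedHomogeneousSubmodule, weightedHomogeneousSubmodule_eq_finsupp_supported,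
    AddMonoidAlgebra.supported_eq_span_single] at hφ
  induction hφ using Submodule.span_induction with
  | mem _ hν =>
    obtain ⟨ν, hν, rfl⟩ := hν
    simp only [single_eq_monomial, pderiv_monomial, X, monomial_mul]
    by_cases hi : ν i = 0
    · rw [hi, Nat.cast_zero, mul_zero, mul_zero, monomial_zero]
      exact isWeightedHomogeneous_zero _ _ _
    refine isWeightedHomogeneous_monomial _ _ _ (add_right_cancel (b := w i) ?_)
    rw [map_add, add_assoc, Finsupp.weight_sub_single_add hi, Finsupp.weight_single, one_smul,
      hm, ← hν, add_comm]
  | zero => simpa using isWeightedHomogeneous_zero _ _ _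
  | add p q _ _ hp hq => simpa [mul_add] using hp.add hq
  | smul r p _ hp =>
    rw [(pderiv i).map_smul, mul_smul_comm]
    exact (weightedHomogeneousSubmodule _ _ _).smul_mem r hp

end MvPolynomial

/-- Summation by parts; the coefficient `n - 2t` is `(t + 1)(n - t) - t(n - t + 1)`. -/
theorem Fin.sum_smul_castSucc_sub_succ {K M : Type*} [CommRing K] [AddCommGroup M] [Module K M]
    {n : ℕ} (f : Fin (n + 1) → M) :
    ∑ i : Fin n, (((i : K) + 1) * (n - i)) • (f i.castSucc - f i.succ) =
      ∑ t : Fin (n + 1), ((n : K) - 2 * t) • f t := by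
  have hcastSucc : ∑ i : Fin n, (((i : K) + 1) * (n - i)) • f i.castSucc =
      ∑ t : Fin (n + 1), (((t : K) + 1) * (n - t)) • f t := by
    simp [Fin.sum_univ_castSucc (n := n)]
  have hsucc : ∑ i : Fin n, (((i : K) + 1) * (n - i)) • f i.succ =
      ∑ t : Fin (n + 1), ((t : K) * (n - t + 1)) • f t := by
    simp only [Fin.sum_univ_succ (n := n), Fin.val_zero, Fin.val_succ]
    simp [sub_add_eq_add_sub, add_sub_add_right_eq_sub]
  rw [Finset.sum_congr rfl fun i _ => smul_sub _ _ _, Finset.sum_sub_distrib, hcastSucc, hsucc,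
    ← Finset.sum_sub_distrib]
  refine Finset.sum_congr rfl fun t _ => ?_
  rw [← sub_smul]
  congr 1
  ring

/-- The `𝔰𝔩₂` computation behind `IsSl2Triple.HasPrimitiveVectorWith.lie_e_pow_succ_toEnd_f`,
which only needs `h` to act by the expected scalars along the string `f ^ j v`. -/
theorem Module.End.apply_pow_succ_apply_of_lie_eq {R M : Type*} [CommRing R] [AddCommGroup M]
    [Module R M] {e f h : Module.End R M} (hef : ⁅e, f⁆ = h) {v : M} (hv : e v = 0) {μ : R}
    (hh : ∀ j : ℕ, h ((f ^ j) v) = (μ - 2 * j) • (f ^ j) v) (i : ℕ) :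
    e ((f ^ (i + 1)) v) = ((i + 1) * (μ - i)) • (f ^ i) v := by
  have hcomm (w : M) : e (f w) = f (e w) + h w := by
    rw [← hef, Ring.lie_def]
    simp
  induction i with
  | zero => simpa [hcomm, hv] using hh 0
  | succ i ih =>
    rw [pow_succ', Module.End.mul_apply, hcomm, ih, map_smul, ← Module.End.mul_apply, ← pow_succ',
      hh, ← add_smul]
    congr 1
    push_cast
    ring

theorem Ring.lie_sum_smul_sum_smul {R A ι κ : Type*} [CommSemiring R] [Ring A] [Module R A]
    [IsScalarTower R A A] [SMulCommClass R A A] (s : Finset ι) (t : Finset κ) (a : ι → R)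
    (b : κ → R) (x : ι → A) (y : κ → A) :
    ⁅∑ i ∈ s, a i • x i, ∑ j ∈ t, b j • y j⁆ = ∑ i ∈ s, ∑ j ∈ t, (a i * b j) • ⁅x i, y j⁆ := by
  simp only [Ring.lie_def, Finset.sum_mul_sum, smul_mul_smul_comm, smul_sub, mul_comm (b _)]
  rw [Finset.sum_comm (s := t)]
  simp only [Finset.sum_sub_distrib]

open MvPolynomial

theorem Dop_eq (n : ℕ) : (Dop n : Module.End ℚ (MvPolynomial (Fin (n + 1)) ℚ)) =
    ∑ i : Fin n, ((i : ℚ) + 1) • xMulPDeriv i.castSucc i.succ := rfl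

theorem Δop_eq (n : ℕ) : (Δop n : Module.End ℚ (MvPolynomial (Fin (n + 1)) ℚ)) =
    ∑ i : Fin n, ((n : ℚ) - i) • xMulPDeriv i.succ i.castSucc := rfl

noncomputable def Hop (n : ℕ) : Module.End ℚ (MvPolynomial (Fin (n + 1)) ℚ) :=
  ∑ t : Fin (n + 1), ((n : ℚ) - 2 * t) • xMulPDeriv t t

theorem lie_Dop_Δop (n : ℕ) :
    ⁅(Dop n : Module.End ℚ (MvPolynomial (Fin (n + 1)) ℚ)), Δop n⁆ = Hop n := by
  rw [Dop_eq, Δop_eq,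
    Ring.lie_sum_smul_sum_smul (A := Module.End ℚ (MvPolynomial (Fin (n + 1)) ℚ))]
  simp only [lie_xMulPDeriv, Fin.succ_inj, Fin.castSucc_inj, smul_sub, smul_ite, smul_zero,
    Finset.sum_sub_distrib, Finset.sum_ite_eq, Finset.sum_ite_eq', Finset.mem_univ, if_true]
  rw [← Finset.sum_sub_distrib]
  simp only [← smul_sub]
  exact Fin.sum_smul_castSucc_sub_succ fun t => xMulPDeriv t t

theorem Hop_apply_of_isHomogeneous {n k m : ℕ} {p : MvPolynomial (Fin (n + 1)) ℚ}
    (hk : p.IsHomogeneous k) (hm : p.IsWeightedHomogeneous Fin.val m) :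
    Hop n p = ((n : ℚ) * k - 2 * m) • p := by
  calc Hop n p = (n : ℚ) • ∑ t : Fin (n + 1), X t * pderiv t p -
        (2 : ℚ) • ∑ t : Fin (n + 1), (t : ℕ) • (X t * pderiv t p) := by
        simp [Hop, LinearMap.sum_apply, sub_smul, Finset.smul_sum, mul_smul,
          Finset.sum_sub_distrib, Nat.cast_smul_eq_nsmul]
    _ = ((n : ℚ) * k - 2 * m) • p := by
        rw [hk.sum_X_mul_pderiv, hm.sum_weight_X_mul_pderiv]
        module

theorem IsWeightedHomogeneous.Δop_pow {n d m : ℕ} {w : Fin (n + 1) → ℕ}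
    (hw : ∀ i : Fin n, w i.succ = w i.castSucc + d) {p : MvPolynomial (Fin (n + 1)) ℚ}
    (hp : p.IsWeightedHomogeneous w m) (j : ℕ) :
    ((Δop n ^ j) p).IsWeightedHomogeneous w (m + j * d) := by
  induction j with
  | zero => simpa using hp
  | succ j ih =>
    rw [pow_succ', Module.End.mul_apply, Δop_eq, LinearMap.sum_apply]
    refine Submodule.sum_mem (weightedHomogeneousSubmodule ℚ w _) fun i _ =>
      Submodule.smul_mem _ _ (ih.X_mul_pderiv ?_)
    rw [hw]
    ring

theorem Qspace_le (n k m : ℕ) :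
    Qspace n k m ≤
      homogeneousSubmodule (Fin (n + 1)) ℚ k ⊓ weightedHomogeneousSubmodule ℚ Fin.val m := by
  refine Submodule.span_le.mpr ?_
  rintro _ ⟨ν, hk, hm, rfl⟩
  refine ⟨isHomogeneous_monomial _ ?_, isWeightedHomogeneous_monomial _ _ _ ?_⟩
  · rwa [Finsupp.degree_eq_sum]
  · rw [Finsupp.weight_apply, Finsupp.sum_fintype _ _ (by simp)]
    simpa [mul_comm] using hm

theorem cayley_relation_general (n k m : ℕ)
    (I : MvPolynomial (Fin (n+1)) ℚ) (hI : I ∈ Qspace n k m) (hD : Dop n I = 0)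
    (i : ℕ) :
    Dop n ((Δop n ^ i) I) =
      (((i : ℤ) * (((n : ℤ) * k - 2 * m) - i + 1) : ℤ) : ℚ) • (Δop n ^ (i - 1)) I := by
  obtain ⟨hk, hm⟩ : I.IsHomogeneous k ∧ I.IsWeightedHomogeneous Fin.val m := Qspace_le n k m hI
  have hweight (j : ℕ) :
      Hop n ((Δop n ^ j) I) = (((n : ℚ) * k - 2 * m) - 2 * j) • (Δop n ^ j) I := by
    have hkj := IsWeightedHomogeneous.Δop_pow (d := 0) (fun _ => rfl) hk j
    have hmj := IsWeightedHomogeneous.Δop_pow (d := 1) (fun _ => rfl) hm j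
    rw [mul_zero, add_zero] at hkj
    rw [Hop_apply_of_isHomogeneous hkj hmj]
    congr 1
    push_cast
    ring
  cases i with
  | zero => simp [hD]
  | succ i =>
    rw [Module.End.apply_pow_succ_apply_of_lie_eq (lie_Dop_Δop n) hD hweight, Nat.add_sub_cancel]
    congr 1
    push_cast
    ring

/-- Cayley's relation `D Δ^i (I) = i (c - i + 1) Δ^{i-1} (I)` for a
semi-invariant `I` of degree `k` and weight `m`, where `c = nk - 2m`. -/
theorem cayley_relation (n k m : ℕ) (h : 2 * m ≤ n * k)
    (I : MvPolynomial (Fin (n+1)) ℚ) (hI : I ∈ Qspace n k m) (hD : Dop n I = 0)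
    (i : ℕ) (hi : 1 ≤ i) :
    Dop n ((Δop n ^ i) I) =
      (((i : ℤ) * (((n : ℤ) * k - 2 * m) - i + 1) : ℤ) : ℚ) • (Δop n ^ (i - 1)) I :=
  cayley_relation_general n k m I hI hD i
end

section
/- Let n, k : ℕ and let m : ℕ satisfy 1 ≤ m and 2m ≤ nk. Then the operator D maps Q_n(k,m) onto Q_n(k,m−1): for every J ∈ Q_n(k,m−1) there exists I ∈ Q_n(k,m) with D(I) = J. -/
/-!
`D` lowers and `Δ` raises the weight, and they generate an `sl₂`-action on `ℚ[a₀, …, aₙ]`: the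
commutator `[D, Δ]` is the derivation `Σ_j (n - 2j) a_j ∂/∂a_j`, which by Euler's identity for
the bigrading (degree, weight) acts on `Q_n(k, w)` as the scalar `nk - 2w`. On the weight spaces
with `2w < nk` these scalars are positive, and an induction on `w` then shows that `DΔ + c` maps
`Q_n(k, w)` onto itself for every `c ≥ 0`; with `c = 0` this exhibits every `J ∈ Q_n(k, m - 1)`
as `D(ΔK)`.
-/

open MvPolynomial

theorem Derivation.finset_sum_apply {R A M ι : Type*} [CommSemiring R] [CommSemiring A]
    [Algebra R A] [AddCommMonoid M] [Module A M] [Module R M] (s : Finset ι)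
    (D : ι → Derivation R A M) (a : A) : (∑ i ∈ s, D i) a = ∑ i ∈ s, D i a := by
  rw [← Derivation.coeFnAddMonoidHom_apply, map_sum, Finset.sum_apply]
  rfl

namespace MvPolynomial

variable {R σ G : Type*} [CommRing R] [AddCommGroup G] {w : σ → G} {m : G}
  {p : MvPolynomial σ R}

theorem IsWeightedHomogeneous.X_mul_pderiv_s7 (h : p.IsWeightedHomogeneous w m) (i j : σ) :
    (X i * pderiv j p).IsWeightedHomogeneous w (m + w i - w j) := by
  have := (isWeightedHomogeneous_X R w i).mul (h.pderiv (n' := m - w j) (sub_add_cancel _ _))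
  rwa [add_sub_left_comm, add_sub_assoc'] at this

theorem IsWeightedHomogeneous.sum_map_weight_smul_X_mul_pderiv [Fintype σ] {M : Type*}
    [AddCommMonoid M] {w : σ → M} {m : M} (f : M →+ R) (h : p.IsWeightedHomogeneous w m) :
    ∑ i, f (w i) • (X i * pderiv i p) = f m • p := by
  induction h using IsWeightedHomogeneous.induction_on with
  | zero => simp
  | add p q _ _ hp hq => simp_rw [map_add, mul_add, smul_add, Finset.sum_add_distrib, hp, hq]
  | monomial d r hd =>
    subst hd
    simp_rw [X_mul_pderiv_monomial, ← Nat.cast_smul_eq_nsmul R, smul_smul]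
    rw [← Finset.sum_smul, Finsupp.weight_apply,
      Finsupp.sum_fintype _ (fun i c => c • w i) (fun _ => zero_smul ℕ _), map_sum]
    simp_rw [map_nsmul, nsmul_eq_mul, mul_comm]

end MvPolynomial

/-- `D`, `Δ`, `[D, Δ]` act like `e`, `f`, `h` of `sl₂`, with `Q w` of `h`-weight `N - 2w`. -/
structure IsSl2Ladder {K M : Type*} [Ring K] [AddCommGroup M] [Module K M]
    (D Δ : M →ₗ[K] M) (Q : ℕ → Submodule K M) (N : K) : Prop where
  mapsTo_lower : ∀ w, Set.MapsTo D (Q (w + 1)) (Q w)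
  lower_eq_zero : ∀ v ∈ Q 0, D v = 0
  mapsTo_raise : ∀ w, Set.MapsTo Δ (Q w) (Q (w + 1))
  lower_raise : ∀ w, ∀ v ∈ Q w, D (Δ v) = Δ (D v) + (N - 2 * w) • v

namespace IsSl2Ladder

variable {K M : Type*} [Field K] [LinearOrder K] [IsStrictOrderedRing K] [AddCommGroup M]
  [Module K M] {D Δ : M →ₗ[K] M} {Q : ℕ → Submodule K M} {N : K}

theorem exists_lower_raise_add_smul_eq (hL : IsSl2Ladder D Δ Q N) {w : ℕ} (hw : 2 * w < N)
    {c : K} (hc : 0 ≤ c) {J : M} (hJ : J ∈ Q w) : ∃ I ∈ Q w, D (Δ I) + c • I = J := by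
  induction w generalizing c J with
  | zero =>
    have hNc : N + c ≠ 0 := by push_cast at hw; positivity
    have hI : (N + c)⁻¹ • J ∈ Q 0 := Submodule.smul_mem _ _ hJ
    refine ⟨_, hI, ?_⟩
    rw [hL.lower_raise 0 _ hI, hL.lower_eq_zero _ hI, map_zero, zero_add, ← add_smul, smul_smul,
      Nat.cast_zero, mul_zero, sub_zero, mul_inv_cancel₀ hNc, one_smul]
  | succ w ih =>
    set B : K := N - 2 * (w + 1 : ℕ) + c
    have hB : 0 < B := by simp only [B]; push_cast at hw ⊢; linarith
    -- if `D (Δ L) + B • L = D J`, then `I = B⁻¹ • (J - Δ L)` does it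
    obtain ⟨L, hLw, hDL⟩ := ih (by push_cast at hw ⊢; linarith) hB.le (hL.mapsTo_lower w hJ)
    have hI : B⁻¹ • (J - Δ L) ∈ Q (w + 1) :=
      Submodule.smul_mem _ _ (sub_mem hJ (hL.mapsTo_raise w hLw))
    refine ⟨_, hI, ?_⟩
    have hDI : D (B⁻¹ • (J - Δ L)) = L := by
      rw [map_smul, map_sub, ← hDL, add_sub_cancel_left, smul_smul, inv_mul_cancel₀ hB.ne',
        one_smul]
    rw [hL.lower_raise _ _ hI, hDI, add_assoc, ← add_smul, smul_smul, mul_inv_cancel₀ hB.ne',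
      one_smul, add_sub_cancel]

theorem surjOn_lower (hL : IsSl2Ladder D Δ Q N) {w : ℕ} (hw : 2 * (w + 1) ≤ N) :
    Set.SurjOn D (Q (w + 1)) (Q w) := by
  intro J hJ
  obtain ⟨I, hI, hDI⟩ := hL.exists_lower_raise_add_smul_eq (by linarith) le_rfl hJ
  exact ⟨Δ I, hL.mapsTo_raise w hI, by simpa using hDI⟩

end IsSl2Ladder

/-- The bigrading (degree, weight); `ℤ`-valued so that `pderiv`, which lowers it, stays inside. -/
def bideg (n : ℕ) : Fin (n + 1) → ℤ × ℤ := fun i => (1, i)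

theorem weight_bideg {n : ℕ} (ν : Fin (n + 1) →₀ ℕ) :
    Finsupp.weight (bideg n) ν =
      (((∑ i, ν i : ℕ) : ℤ), ((∑ i : Fin (n + 1), (i : ℕ) * ν i : ℕ) : ℤ)) := by
  rw [Finsupp.weight_apply,
    Finsupp.sum_fintype _ (fun i c => c • bideg n i) (fun _ => zero_smul ℕ _)]
  ext <;> simp [bideg, Prod.fst_sum, Prod.snd_sum, mul_comm]

theorem Qspace_eq_weightedHomogeneousSubmodule (n k m : ℕ) :
    Qspace n k m = weightedHomogeneousSubmodule ℚ (bideg n) (k, m) := by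
  rw [weightedHomogeneousSubmodule_eq_finsupp_supported, AddMonoidAlgebra.supported_eq_span_single,
    Qspace]
  congr 1
  ext p
  simp only [Set.mem_image, Set.mem_ofPred_eq, weight_bideg, Prod.mk.injEq, Nat.cast_inj,
    single_eq_monomial, and_assoc, eq_comm (b := p)]

theorem mem_Qspace {n k m : ℕ} {p : MvPolynomial (Fin (n + 1)) ℚ} :
    p ∈ Qspace n k m ↔ p.IsWeightedHomogeneous (bideg n) (k, m) := by
  rw [Qspace_eq_weightedHomogeneousSubmodule, mem_weightedHomogeneousSubmodule]

section Operators

variable {n : ℕ} {p : MvPolynomial (Fin (n + 1)) ℚ}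

theorem Dop_apply (p : MvPolynomial (Fin (n + 1)) ℚ) :
    Dop n p = ∑ i : Fin n, ((i : ℚ) + 1) • (X i.castSucc * pderiv i.succ p) := by
  simp [Dop]

theorem Δop_apply (p : MvPolynomial (Fin (n + 1)) ℚ) :
    Δop n p = ∑ i : Fin n, ((n : ℚ) - i) • (X i.succ * pderiv i.castSucc p) := by
  simp [Δop]

theorem MvPolynomial.IsWeightedHomogeneous.Dop {a b : ℤ}
    (h : p.IsWeightedHomogeneous (bideg n) (a, b)) :
    (Dop n p).IsWeightedHomogeneous (bideg n) (a, b - 1) := by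
  rw [Dop_apply]
  refine IsWeightedHomogeneous.sum _ _ _ fun i _ =>
    (weightedHomogeneousSubmodule ℚ (bideg n) _).smul_mem _ ?_
  have hw : ((a, b - 1) : ℤ × ℤ) = (a, b) + bideg n i.castSucc - bideg n i.succ :=
    Prod.ext (by simp [bideg]) (by simp [bideg]; ring)
  exact hw ▸ h.X_mul_pderiv_s7 _ _

theorem MvPolynomial.IsWeightedHomogeneous.Δop {a b : ℤ}
    (h : p.IsWeightedHomogeneous (bideg n) (a, b)) :
    (Δop n p).IsWeightedHomogeneous (bideg n) (a, b + 1) := by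
  rw [Δop_apply]
  refine IsWeightedHomogeneous.sum _ _ _ fun i _ =>
    (weightedHomogeneousSubmodule ℚ (bideg n) _).smul_mem _ ?_
  have hw : ((a, b + 1) : ℤ × ℤ) = (a, b) + bideg n i.succ - bideg n i.castSucc :=
    Prod.ext (by simp [bideg]) (by simp [bideg]; ring)
  exact hw ▸ h.X_mul_pderiv_s7 _ _

theorem MvPolynomial.IsWeightedHomogeneous.eq_zero_of_bideg_snd_neg {a b : ℤ}
    (h : p.IsWeightedHomogeneous (bideg n) (a, b)) (hb : b < 0) : p = 0 := by
  ext ν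
  refine h.coeff_eq_zero ν fun hν => ?_
  rw [weight_bideg, Prod.mk.injEq] at hν
  omega

theorem Dop_mapsTo_Qspace (k w : ℕ) :
    Set.MapsTo (Dop n) (Qspace n k (w + 1)) (Qspace n k w) := by
  intro p hp
  rw [SetLike.mem_coe, mem_Qspace] at *
  simpa using hp.Dop

theorem Δop_mapsTo_Qspace (k w : ℕ) :
    Set.MapsTo (Δop n) (Qspace n k w) (Qspace n k (w + 1)) := by
  intro p hp
  rw [SetLike.mem_coe, mem_Qspace] at *
  simpa using hp.Δop

theorem Dop_eq_zero_of_mem_Qspace_zero {k : ℕ} (hp : p ∈ Qspace n k 0) : Dop n p = 0 :=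
  (mem_Qspace.mp hp).Dop.eq_zero_of_bideg_snd_neg (by simp)

end Operators

section Commutator

variable {n : ℕ}

noncomputable def Dder (n : ℕ) :
    Derivation ℚ (MvPolynomial (Fin (n + 1)) ℚ) (MvPolynomial (Fin (n + 1)) ℚ) :=
  ∑ i : Fin n, ((i : ℚ) + 1) • (X i.castSucc : MvPolynomial (Fin (n + 1)) ℚ) • pderiv i.succ

noncomputable def Δder (n : ℕ) :
    Derivation ℚ (MvPolynomial (Fin (n + 1)) ℚ) (MvPolynomial (Fin (n + 1)) ℚ) :=
  ∑ i : Fin n, ((n : ℚ) - i) • (X i.succ : MvPolynomial (Fin (n + 1)) ℚ) • pderiv i.castSucc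

theorem Dop_eq_Dder (p : MvPolynomial (Fin (n + 1)) ℚ) : Dop n p = Dder n p := by
  simp [Dop_apply, Dder, Derivation.finset_sum_apply]

theorem Δop_eq_Δder (p : MvPolynomial (Fin (n + 1)) ℚ) : Δop n p = Δder n p := by
  simp [Δop_apply, Δder, Derivation.finset_sum_apply]

theorem Dder_X_zero : Dder n (X 0) = 0 := by
  simp [Dder, Derivation.finset_sum_apply, pderiv_X, Fin.succ_ne_zero]

theorem Dder_X_succ (i : Fin n) : Dder n (X i.succ) = ((i : ℚ) + 1) • X i.castSucc := by
  simp [Dder, Derivation.finset_sum_apply, pderiv_X, Pi.single_apply]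

theorem Δder_X_last : Δder n (X (Fin.last n)) = 0 := by
  simp [Δder, Derivation.finset_sum_apply, pderiv_X, Fin.castSucc_ne_last]

theorem Δder_X_castSucc (i : Fin n) : Δder n (X i.castSucc) = ((n : ℚ) - i) • X i.succ := by
  simp [Δder, Derivation.finset_sum_apply, pderiv_X, Pi.single_apply]

theorem Dder_Δder_X (j : Fin (n + 1)) :
    Dder n (Δder n (X j)) = (((n : ℚ) - j) * (j + 1)) • X j := by
  induction j using Fin.lastCases with
  | last => simp [Δder_X_last]
  | cast i => simp [Δder_X_castSucc, Dder_X_succ, smul_smul]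

theorem Δder_Dder_X (j : Fin (n + 1)) :
    Δder n (Dder n (X j)) = ((j : ℚ) * (n - j + 1)) • X j := by
  induction j using Fin.cases with
  | zero => simp [Dder_X_zero]
  | succ i =>
    simp only [Dder_X_succ, Derivation.map_smul, Δder_X_castSucc, smul_smul, Fin.val_succ]
    congr 1
    push_cast
    ring

theorem lie_Dder_Δder :
    ⁅Dder n, Δder n⁆ =
      ∑ j : Fin (n + 1), ((n : ℚ) - 2 * j) • (X j : MvPolynomial (Fin (n + 1)) ℚ) • pderiv j := by
  refine derivation_ext fun j => ?_
  rw [Derivation.commutator_apply, Dder_Δder_X, Δder_Dder_X, ← sub_smul,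
    show ((n : ℚ) - j) * (j + 1) - j * (n - j + 1) = n - 2 * j by ring]
  simp [Derivation.finset_sum_apply, pderiv_X, Pi.single_apply]

end Commutator

theorem Dop_Δop_of_mem_Qspace {n k w : ℕ} {p : MvPolynomial (Fin (n + 1)) ℚ}
    (hp : p ∈ Qspace n k w) :
    Dop n (Δop n p) = Δop n (Dop n p) + ((n * k : ℚ) - 2 * w) • p := by
  let f : ℤ × ℤ →+ ℚ :=
    (Int.castAddHom ℚ).comp ((n : ℤ) • AddMonoidHom.fst ℤ ℤ - 2 • AddMonoidHom.snd ℤ ℤ)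
  have euler := (mem_Qspace.mp hp).sum_map_weight_smul_X_mul_pderiv f
  rw [← sub_eq_iff_eq_add', Dop_eq_Dder, Δop_eq_Δder, Dop_eq_Dder, Δop_eq_Δder,
    ← Derivation.commutator_apply, lie_Dder_Δder]
  simpa [f, bideg, Derivation.finset_sum_apply, mul_comm] using euler

theorem isSl2Ladder_Qspace (n k : ℕ) : IsSl2Ladder (Dop n) (Δop n) (Qspace n k) (n * k) where
  mapsTo_lower := Dop_mapsTo_Qspace k
  lower_eq_zero _ := Dop_eq_zero_of_mem_Qspace_zero
  mapsTo_raise := Δop_mapsTo_Qspace k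
  lower_raise _ _ := Dop_Δop_of_mem_Qspace

/-- `D` maps `Q_n(k,m)` onto `Q_n(k,m-1)`. -/
theorem D_surjective_on_Q (n k m : ℕ) (hm : 1 ≤ m) (h : 2 * m ≤ n * k) :
    ∀ J ∈ Qspace n k (m - 1), ∃ I ∈ Qspace n k m, Dop n I = J := by
  obtain ⟨w, rfl⟩ : ∃ w, m = w + 1 := ⟨m - 1, by omega⟩
  rw [Nat.add_sub_cancel]
  exact (isSl2Ladder_Qspace n k).surjOn_lower (by exact_mod_cast h)
end
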